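/- arXiv:1703.10192 — 3 statements merged into one kernel-verified Lean document; each statement's English description precedes it below -/
import Mathlib

section
/- Let H > 0, x ∈ ℝ, and let f : [0,H] → ℝ be a piecewise C¹ path with jump times 0 = t₀ < t₁ < ⋯ < t_k < t_{k+1} = H and C¹ pieces g_i. Assume f avoids the level x at endpoints and jumps, and g_i'(t) ≠ 0 whenever g_i(t) = x for t ∈ [t_i,t_{i+1}] and 0 ≤ i ≤ k. Then the continuous crossing set C_x(f) is finite and (1/(2δ)) ∫₀^H |f'(t)| · 1_{|f(t)−x| ≤ δ} dt tends to the cardinality of C_x(f) as δ → 0⁺, where f' is the piecewise derivative of f. (Kac's counting formula for piecewise C¹ paths.) -/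
/-!
Near a crossing `z` the path is a C¹ diffeomorphism of a small ball `closedBall z ε` onto a
neighbourhood of the level `x`, so by the one-dimensional change of variables the integral of
`|f'|` over the part of that ball where `|f - x| ≤ δ` is the length `2δ` of `[x - δ, x + δ]` once
`δ` is small. The crossings are finitely many: on each closed piece the level set is compact and
consists of isolated points. Away from the balls around them `|f - x|` is bounded below on every
piece, again by compactness, so for small `δ` the integrand vanishes there, and the integral is
`2δ · #C_x(f)`.
-/

open MeasureTheory Filter Set Topology

/-- The continuous crossing set of the level `x` by `f` on `(0,H)`. -/
def crossSet (H x : ℝ) (f : ℝ → ℝ) : Set ℝ :=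
  {s : ℝ | s ∈ Set.Ioo 0 H ∧ ContinuousAt f s ∧ f s = x}

open Metric

noncomputable def kacDensity (f f' : ℝ → ℝ) (x δ t : ℝ) : ℝ :=
  |f' t| * ({u : ℝ | |f u - x| ≤ δ}.indicator (fun _ => (1 : ℝ)) t)

section Density

variable {f f' : ℝ → ℝ} {x δ : ℝ}

lemma kacDensity_eq_abs_smul_indicator (t : ℝ) :
    kacDensity f f' x δ t = |f' t| • (closedBall x δ).indicator (fun _ => (1 : ℝ)) (f t) := by
  simp [kacDensity, indicator, Real.dist_eq]

lemma kacDensity_eq_zero {t : ℝ} (h : δ < |f t - x|) : kacDensity f f' x δ t = 0 := by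
  simp [kacDensity, h.not_ge]

lemma integrableOn_kacDensity_and_setIntegral_eq {s : Set ℝ} (hs : MeasurableSet s)
    (hd : ∀ t ∈ s, HasDerivWithinAt f (f' t) s t) (hinj : InjOn f s) (hδ : 0 ≤ δ)
    (hball : closedBall x δ ⊆ f '' s) :
    IntegrableOn (kacDensity f f' x δ) s ∧ ∫ t in s, kacDensity f f' x δ t = 2 * δ := by
  simp only [funext kacDensity_eq_abs_smul_indicator,
    ← integrableOn_image_iff_integrableOn_abs_deriv_smul hs hd hinj,
    ← integral_image_eq_integral_abs_deriv_smul hs hd hinj]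
  refine ⟨(integrable_indicator_iff measurableSet_closedBall).2
    (integrableOn_const measure_closedBall_lt_top.ne) |>.integrableOn, ?_⟩
  rw [setIntegral_indicator measurableSet_closedBall, inter_eq_right.2 hball, setIntegral_const,
    Real.volume_real_closedBall hδ, smul_eq_mul, mul_one]

end Density

lemma injOn_of_hasDerivAt_ne_zero {f f' : ℝ → ℝ} {s : Set ℝ} (hs : s.OrdConnected)
    (hd : ∀ t ∈ s, HasDerivAt f (f' t) t) (hf' : ∀ t ∈ s, f' t ≠ 0) : InjOn f s := by
  have hlt : ∀ u ∈ s, ∀ v ∈ s, u < v → f u ≠ f v := fun u hu v hv huv heq => by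
    have huvs : Icc u v ⊆ s := hs.out hu hv
    obtain ⟨c, hc, hc0⟩ := exists_hasDerivAt_eq_zero huv
      (fun t ht => (hd t (huvs ht)).continuousAt.continuousWithinAt) heq
      (fun t ht => hd t (huvs (Ioo_subset_Icc_self ht)))
    exact hf' c (huvs (Ioo_subset_Icc_self hc)) hc0
  intro u hu v hv huv
  by_contra hne
  rcases lt_or_gt_of_ne hne with h | h
  exacts [hlt u hu v hv h huv, hlt v hv u hu h huv.symm]

lemma eventually_eventually_setIntegral_kacDensity_closedBall {f f' : ℝ → ℝ} {z : ℝ}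
    (hd : ∀ᶠ t in 𝓝 z, HasDerivAt f (f' t) t) (hc : ContinuousAt f' z) (hz : f' z ≠ 0) :
    ∀ᶠ ε in 𝓝[>] 0, ∀ᶠ δ in 𝓝[>] 0, IntegrableOn (kacDensity f f' (f z) δ) (closedBall z ε) ∧
      ∫ t in closedBall z ε, kacDensity f f' (f z) δ t = 2 * δ := by
  obtain ⟨r, hr, hball⟩ := eventually_nhds_iff_ball.1 (hd.and (hc.eventually_ne hz))
  have hopen := (hasStrictDerivAt_of_hasDerivAt_of_continuousAt hd hc).map_nhds_eq hz
  filter_upwards [Ioo_mem_nhdsGT hr] with ε hε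
  have hsub : closedBall z ε ⊆ ball z r := closedBall_subset_ball hε.2
  have hinj : InjOn f (closedBall z ε) :=
    injOn_of_hasDerivAt_ne_zero (by rw [Real.closedBall_eq_Icc]; exact ordConnected_Icc)
      (fun t ht => (hball t (hsub ht)).1) (fun t ht => (hball t (hsub ht)).2)
  have himg : f '' closedBall z ε ∈ 𝓝 (f z) :=
    hopen ▸ image_mem_map (closedBall_mem_nhds z hε.1)
  filter_upwards [nhdsWithin_le_nhds (eventually_closedBall_subset himg), self_mem_nhdsWithin]
    with δ hδ hδpos
  exact integrableOn_kacDensity_and_setIntegral_eq measurableSet_closedBall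
    (fun t ht => (hball t (hsub ht)).1.hasDerivWithinAt) hinj (le_of_lt hδpos) hδ

lemma eventually_setIntegral_eq_ncard_mul {X : Type*} [MetricSpace X] [MeasurableSpace X]
    [OpensMeasurableSpace X] {μ : Measure X} {S : Set X} (hS : MeasurableSet S) {Z : Set X}
    (hZ : Z.Finite) (hZS : ∀ z ∈ Z, S ∈ 𝓝 z) {l : Filter ℝ} {D : ℝ → X → ℝ} {c : ℝ → ℝ}
    (hloc : ∀ z ∈ Z, ∀ᶠ ε in 𝓝[>] 0, ∀ᶠ δ in l,
      IntegrableOn (D δ) (closedBall z ε) μ ∧ ∫ t in closedBall z ε, D δ t ∂μ = c δ)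
    (hvan : ∀ ε > 0, ∀ᶠ δ in l, ∀ t ∈ S \ ⋃ z ∈ Z, ball z ε, D δ t = 0) :
    ∀ᶠ δ in l, ∫ t in S, D δ t ∂μ = Z.ncard * c δ := by
  lift Z to Finset X using hZ
  rw [ncard_coe_finset]
  have hsep (z z' : X) : ∀ᶠ ε in 𝓝 (0 : ℝ), z ≠ z' → ε + ε < dist z z' := by
    rcases eq_or_ne z z' with rfl | hne
    · exact Eventually.of_forall fun _ h => absurd rfl h
    · exact ((continuous_id.add continuous_id).tendsto' 0 0 (add_zero 0)).eventually
        (gt_mem_nhds (dist_pos.2 hne)) |>.mono fun _ h _ => h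
  obtain ⟨ε, hε, hεZ⟩ : ∃ ε, 0 < ε ∧ ∀ z ∈ Z, (∀ᶠ δ in l,
      IntegrableOn (D δ) (closedBall z ε) μ ∧ ∫ t in closedBall z ε, D δ t ∂μ = c δ) ∧
      closedBall z ε ⊆ S ∧ ∀ z' ∈ Z, z ≠ z' → ε + ε < dist z z' :=
    (eventually_mem_nhdsWithin.and ((eventually_all_finset Z).2 fun z hz =>
      (hloc z hz).and (nhdsWithin_le_nhds ((eventually_closedBall_subset (hZS z hz)).and
        ((eventually_all_finset Z).2 fun z' _ => hsep z z'))))).exists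
  have hU : ⋃ z ∈ Z, closedBall z ε ⊆ S := iUnion₂_subset fun z hz => (hεZ z hz).2.1
  filter_upwards [(eventually_all_finset Z).2 fun z hz => (hεZ z hz).1, hvan ε hε]
    with δ hloc hvan
  rw [setIntegral_eq_of_subset_of_forall_sdiff_eq_zero hS hU fun t ht => hvan t
      ⟨ht.1, fun h => ht.2 (biUnion_mono subset_rfl (fun _ _ => ball_subset_closedBall) h)⟩,
    integral_biUnion_finset Z (fun _ _ => measurableSet_closedBall)
      (fun z hz z' hz' hne => closedBall_disjoint_closedBall ((hεZ z hz).2.2 z' hz' hne))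
      (fun z hz => (hloc z hz).1),
    Finset.sum_congr rfl fun z hz => (hloc z hz).2, Finset.sum_const, nsmul_eq_mul]

lemma IsCompact.finite_setOf_eq {X Y : Type*} [TopologicalSpace X] [T2Space X]
    [TopologicalSpace Y] [T1Space Y] {K : Set X} (hK : IsCompact K) {g : X → Y}
    (hg : ContinuousOn g K) {y : Y} (hiso : ∀ t ∈ K, g t = y → ∀ᶠ s in 𝓝[≠] t, g s ≠ y) :
    {t ∈ K | g t = y}.Finite := by
  refine IsCompact.finite ?_ (isDiscrete_iff_nhdsNE.2 fun t ht => ?_)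
  · exact hK.of_isClosed_subset (hg.preimage_isClosed_of_isClosed hK.isClosed isClosed_singleton)
      fun t ht => ht.1
  · exact eventually_false_iff_eq_bot.1 <| ((hiso t ht.1 ht.2).filter_mono inf_le_left).and
      (mem_inf_of_right (mem_principal_self _)) |>.mono fun s hs => hs.1 hs.2.2

lemma mem_Ioo_of_apply_eq {α β : Type*} [PartialOrder α] {g : α → β} {a b t : α} {x : β}
    (ht : t ∈ Icc a b) (hgt : g t = x) (ha : g a ≠ x) (hb : g b ≠ x) : t ∈ Ioo a b :=
  ⟨ht.1.lt_of_ne (by rintro rfl; exact ha hgt), ht.2.lt_of_ne (by rintro rfl; exact hb hgt)⟩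

lemma finite_setOf_mem_Icc_apply_eq {a b x : ℝ} {g g' : ℝ → ℝ}
    (hd : ∀ t ∈ Icc a b, HasDerivWithinAt g (g' t) (Icc a b) t) (ha : g a ≠ x) (hb : g b ≠ x)
    (hnd : ∀ t ∈ Icc a b, g t = x → g' t ≠ 0) : {t ∈ Icc a b | g t = x}.Finite :=
  isCompact_Icc.finite_setOf_eq (fun t ht => (hd t ht).continuousWithinAt) fun t ht hgt => by
    have hIoo := mem_Ioo_of_apply_eq ht hgt ha hb
    simpa only [hgt] using
      ((hd t ht).hasDerivAt (Icc_mem_nhds hIoo.1 hIoo.2)).eventually_ne (hnd t ht hgt)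

section Piece

variable {a b t : ℝ} {f f' g g' : ℝ → ℝ}

lemma hasDerivAt_of_eqOn_Ioo (hd : ∀ s ∈ Icc a b, HasDerivWithinAt g (g' s) (Icc a b) s)
    (hfg : EqOn f g (Ioo a b)) (hf' : EqOn f' g' (Ioo a b)) (ht : t ∈ Ioo a b) :
    HasDerivAt f (f' t) t := by
  rw [hf' ht]
  exact ((hd t (Ioo_subset_Icc_self ht)).hasDerivAt (Icc_mem_nhds ht.1 ht.2)).congr_of_eventuallyEq
    (hfg.eventuallyEq_of_mem (Ioo_mem_nhds ht.1 ht.2))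

lemma continuousAt_of_eqOn_Ioo (hc : ContinuousOn g' (Icc a b)) (hf' : EqOn f' g' (Ioo a b))
    (ht : t ∈ Ioo a b) : ContinuousAt f' t :=
  ((hc t (Ioo_subset_Icc_self ht)).continuousAt (Icc_mem_nhds ht.1 ht.2)).congr
    (hf'.eventuallyEq_of_mem (Ioo_mem_nhds ht.1 ht.2)).symm

end Piece

lemma exists_mem_Ico_of_mem_Ico {α : Type*} [LinearOrder α] {τ : ℕ → α} {n : ℕ} {t : α}
    (ht : t ∈ Ico (τ 0) (τ n)) : ∃ i < n, t ∈ Ico (τ i) (τ (i + 1)) := by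
  classical
  have hex : ∃ j, t < τ j := ⟨n, ht.2⟩
  obtain ⟨i, hi⟩ : ∃ i, Nat.find hex = i + 1 :=
    Nat.exists_eq_add_one_of_ne_zero fun h => (h ▸ Nat.find_spec hex).not_ge ht.1
  refine ⟨i, ?_, not_lt.1 (Nat.find_min hex (by omega)), hi ▸ Nat.find_spec hex⟩
  have := Nat.find_min' hex ht.2
  omega

lemma eventually_forall_lt_abs_sub {X : Type*} [TopologicalSpace X] {K : Set X}
    (hK : IsCompact K) {g : X → ℝ} (hg : ContinuousOn g K) {x : ℝ} (hx : ∀ t ∈ K, g t ≠ x) :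
    ∀ᶠ δ in 𝓝 (0 : ℝ), ∀ t ∈ K, δ < |g t - x| := by
  obtain ⟨c, hc, hcK⟩ := hK.exists_forall_le' (hg.sub continuousOn_const).abs
    fun t ht => abs_pos.2 (sub_ne_zero.2 (hx t ht))
  filter_upwards [gt_mem_nhds hc] with δ hδ t ht using hδ.trans_le (hcK t ht)

structure IsPiecewiseC1Transversal (H x : ℝ) (k : ℕ) (τ : ℕ → ℝ) (g g' : ℕ → ℝ → ℝ)
    (f f' : ℝ → ℝ) : Prop where
  τ_zero : τ 0 = 0
  τ_succ_last : τ (k + 1) = H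
  τ_lt_succ : ∀ i ≤ k, τ i < τ (i + 1)
  hasDerivWithinAt : ∀ i ≤ k, ∀ s ∈ Icc (τ i) (τ (i + 1)),
    HasDerivWithinAt (g i) (g' i s) (Icc (τ i) (τ (i + 1))) s
  continuousOn_deriv : ∀ i ≤ k, ContinuousOn (g' i) (Icc (τ i) (τ (i + 1)))
  apply_eq : ∀ i ≤ k, ∀ s ∈ Ico (τ i) (τ (i + 1)), f s = g i s
  deriv_eq : ∀ i ≤ k, ∀ s ∈ Ico (τ i) (τ (i + 1)), f' s = g' i s
  avoid : ∀ i ≤ k, g i (τ i) ≠ x ∧ g i (τ (i + 1)) ≠ x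
  deriv_ne_zero : ∀ i ≤ k, ∀ s ∈ Icc (τ i) (τ (i + 1)), g i s = x → g' i s ≠ 0

namespace IsPiecewiseC1Transversal

variable {H x : ℝ} {k : ℕ} {τ : ℕ → ℝ} {g g' : ℕ → ℝ → ℝ} {f f' : ℝ → ℝ}

lemma monotoneOn_τ (hP : IsPiecewiseC1Transversal H x k τ g g' f f') :
    MonotoneOn τ (Iic (k + 1)) :=
  (strictMonoOn_Iic_of_lt_succ fun m hm => hP.τ_lt_succ m (Nat.lt_succ_iff.1 hm)).monotoneOn

lemma eqOn_Ioo (hP : IsPiecewiseC1Transversal H x k τ g g' f f') {i : ℕ} (hi : i ≤ k) :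
    EqOn f (g i) (Ioo (τ i) (τ (i + 1))) :=
  fun s hs => hP.apply_eq i hi s (Ioo_subset_Ico_self hs)

lemma eqOn_deriv_Ioo (hP : IsPiecewiseC1Transversal H x k τ g g' f f') {i : ℕ} (hi : i ≤ k) :
    EqOn f' (g' i) (Ioo (τ i) (τ (i + 1))) :=
  fun s hs => hP.deriv_eq i hi s (Ioo_subset_Ico_self hs)

lemma hasDerivAt (hP : IsPiecewiseC1Transversal H x k τ g g' f f') {i : ℕ} (hi : i ≤ k) {t : ℝ}
    (ht : t ∈ Ioo (τ i) (τ (i + 1))) : HasDerivAt f (f' t) t :=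
  hasDerivAt_of_eqOn_Ioo (hP.hasDerivWithinAt i hi) (hP.eqOn_Ioo hi) (hP.eqOn_deriv_Ioo hi) ht

lemma crossSet_eq (hP : IsPiecewiseC1Transversal H x k τ g g' f f') :
    crossSet H x f = ⋃ i ∈ Iic k, {t ∈ Ioo (τ i) (τ (i + 1)) | g i t = x} := by
  ext t
  simp only [crossSet, mem_iUnion, mem_Iic, exists_prop]
  constructor
  · rintro ⟨ht, -, hft⟩
    obtain ⟨i, hi, hti⟩ := exists_mem_Ico_of_mem_Ico (n := k + 1) (τ := τ)
      (by rw [hP.τ_zero, hP.τ_succ_last]; exact Ioo_subset_Ico_self ht)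
    have hi : i ≤ k := Nat.lt_succ_iff.1 hi
    have hgt : g i t = x := (hP.apply_eq i hi t hti).symm.trans hft
    exact ⟨i, hi, mem_Ioo_of_apply_eq (Ico_subset_Icc_self hti) hgt (hP.avoid i hi).1
      (hP.avoid i hi).2, hgt⟩
  · rintro ⟨i, hi, hti, hgt⟩
    refine ⟨⟨?_, ?_⟩, (hP.hasDerivAt hi hti).continuousAt, (hP.eqOn_Ioo hi hti).trans hgt⟩
    · exact hP.τ_zero ▸ (hP.monotoneOn_τ (by simp) (by simp; omega) (Nat.zero_le i)).trans_lt hti.1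
    · exact hP.τ_succ_last ▸ hti.2.trans_le (hP.monotoneOn_τ (by simp; omega) (by simp) (by omega))

lemma finite_crossSet (hP : IsPiecewiseC1Transversal H x k τ g g' f f') :
    (crossSet H x f).Finite :=
  hP.crossSet_eq ▸ (finite_Iic k).biUnion fun i hi =>
    (finite_setOf_mem_Icc_apply_eq (hP.hasDerivWithinAt i hi) (hP.avoid i hi).1
      (hP.avoid i hi).2 (hP.deriv_ne_zero i hi)).subset
      fun _ ht => ⟨Ioo_subset_Icc_self ht.1, ht.2⟩

lemma eventually_eventually_setIntegral_closedBall_of_mem_crossSet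
    (hP : IsPiecewiseC1Transversal H x k τ g g' f f') {z : ℝ} (hz : z ∈ crossSet H x f) :
    ∀ᶠ ε in 𝓝[>] 0, ∀ᶠ δ in 𝓝[>] 0, IntegrableOn (kacDensity f f' x δ) (closedBall z ε) ∧
      ∫ t in closedBall z ε, kacDensity f f' x δ t = 2 * δ := by
  rw [hP.crossSet_eq, mem_iUnion₂] at hz
  obtain ⟨i, hi, hzi, hgz⟩ := hz
  have hfz : f z = x := (hP.eqOn_Ioo hi hzi).trans hgz
  exact hfz ▸ eventually_eventually_setIntegral_kacDensity_closedBall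
    (eventually_of_mem (Ioo_mem_nhds hzi.1 hzi.2) fun t ht => hP.hasDerivAt hi ht)
    (continuousAt_of_eqOn_Ioo (hP.continuousOn_deriv i hi) (hP.eqOn_deriv_Ioo hi) hzi)
    (hP.eqOn_deriv_Ioo hi hzi ▸ hP.deriv_ne_zero i hi z (Ioo_subset_Icc_self hzi) hgz)

lemma eventually_kacDensity_eq_zero (hP : IsPiecewiseC1Transversal H x k τ g g' f f') {ε : ℝ}
    (hε : 0 < ε) : ∀ᶠ δ in 𝓝 (0 : ℝ),
      ∀ t ∈ Ico 0 H \ ⋃ z ∈ crossSet H x f, ball z ε, kacDensity f f' x δ t = 0 := by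
  set U := ⋃ z ∈ crossSet H x f, ball z ε
  have hlevel : ∀ i ≤ k, ∀ t ∈ Icc (τ i) (τ (i + 1)), g i t = x → t ∈ U := fun i hi t ht hgt =>
    mem_biUnion (hP.crossSet_eq ▸ mem_biUnion (mem_Iic.2 hi)
      ⟨mem_Ioo_of_apply_eq ht hgt (hP.avoid i hi).1 (hP.avoid i hi).2, hgt⟩) (mem_ball_self hε)
  have hbound := (finite_Iic k).eventually_all.2 fun i (hi : i ≤ k) =>
    eventually_forall_lt_abs_sub (isCompact_Icc.diff (isOpen_biUnion fun _ _ => isOpen_ball))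
      (fun t ht => (hP.hasDerivWithinAt i hi t ht.1).continuousWithinAt.mono sdiff_subset)
      fun t ht hgt => ht.2 (hlevel i hi t ht.1 hgt)
  filter_upwards [hbound] with δ hδ t ht
  obtain ⟨i, hi, hti⟩ := exists_mem_Ico_of_mem_Ico (n := k + 1) (τ := τ)
    (by rw [hP.τ_zero, hP.τ_succ_last]; exact ht.1)
  have hi : i ≤ k := Nat.lt_succ_iff.1 hi
  exact kacDensity_eq_zero (hP.apply_eq i hi t hti ▸ hδ i hi t ⟨Ico_subset_Icc_self hti, ht.2⟩)

lemma eventually_setIntegral_kacDensity (hP : IsPiecewiseC1Transversal H x k τ g g' f f') :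
    ∀ᶠ δ in 𝓝[>] 0, ∫ t in Icc 0 H, kacDensity f f' x δ t = (crossSet H x f).ncard * (2 * δ) := by
  simp only [integral_Icc_eq_integral_Ico]
  refine eventually_setIntegral_eq_ncard_mul measurableSet_Ico hP.finite_crossSet
    (fun z hz => mem_of_superset (Ioo_mem_nhds hz.1.1 hz.1.2) Ioo_subset_Ico_self)
    (fun z hz => hP.eventually_eventually_setIntegral_closedBall_of_mem_crossSet hz)
    fun ε hε => nhdsWithin_le_nhds (hP.eventually_kacDensity_eq_zero hε)

end IsPiecewiseC1Transversal

theorem kac_counting_formula_piecewise_general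
    (H x : ℝ) (k : ℕ) (τ : ℕ → ℝ)
    (g g' : ℕ → ℝ → ℝ) (f f' : ℝ → ℝ)
    (hτ0 : τ 0 = 0) (hτH : τ (k+1) = H)
    (hτmono : ∀ i ≤ k, τ i < τ (i+1))
    (hderiv : ∀ i ≤ k, ∀ s ∈ Icc (τ i) (τ (i+1)),
      HasDerivWithinAt (g i) (g' i s) (Icc (τ i) (τ (i+1))) s)
    (hcont : ∀ i ≤ k, ContinuousOn (g' i) (Icc (τ i) (τ (i+1))))
    (hfg : ∀ i ≤ k, ∀ s ∈ Ico (τ i) (τ (i+1)), f s = g i s)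
    (hf' : ∀ i ≤ k, ∀ s ∈ Ico (τ i) (τ (i+1)), f' s = g' i s)
    (havoid : ∀ i ≤ k, g i (τ i) ≠ x ∧ g i (τ (i+1)) ≠ x)
    (hnd : ∀ i ≤ k, ∀ s ∈ Icc (τ i) (τ (i+1)), g i s = x → g' i s ≠ 0) :
    (crossSet H x f).Finite ∧
    Tendsto
      (fun δ : ℝ => (1 / (2 * δ)) *
        ∫ s in Icc (0:ℝ) H,
          |f' s| * ({u : ℝ | |f u - x| ≤ δ}.indicator (fun _ => (1:ℝ)) s))
      (𝓝[>] (0:ℝ))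
      (𝓝 (((crossSet H x f).ncard : ℝ))) := by
  have hP : IsPiecewiseC1Transversal H x k τ g g' f f' :=
    ⟨hτ0, hτH, hτmono, hderiv, hcont, hfg, hf', havoid, hnd⟩
  refine ⟨hP.finite_crossSet, tendsto_const_nhds.congr' ?_⟩
  filter_upwards [hP.eventually_setIntegral_kacDensity, self_mem_nhdsWithin]
    with δ hδ (hδpos : 0 < δ)
  change _ = 1 / (2 * δ) * ∫ s in Icc 0 H, kacDensity f f' x δ s
  rw [hδ]
  field_simp

/-- **Kac's counting formula for piecewise C¹ paths.** -/
theorem kac_counting_formula_piecewise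
    (H x : ℝ) (hH : 0 < H) (k : ℕ) (τ : ℕ → ℝ)
    (g g' : ℕ → ℝ → ℝ) (f f' : ℝ → ℝ)
    (hτ0 : τ 0 = 0) (hτH : τ (k+1) = H)
    (hτmono : ∀ i ≤ k, τ i < τ (i+1))
    (hderiv : ∀ i ≤ k, ∀ s ∈ Icc (τ i) (τ (i+1)),
      HasDerivWithinAt (g i) (g' i s) (Icc (τ i) (τ (i+1))) s)
    (hcont : ∀ i ≤ k, ContinuousOn (g' i) (Icc (τ i) (τ (i+1))))
    (hfg : ∀ i ≤ k, ∀ s ∈ Ico (τ i) (τ (i+1)), f s = g i s)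
    (hfH : f H = g k H)
    (hf' : ∀ i ≤ k, ∀ s ∈ Ico (τ i) (τ (i+1)), f' s = g' i s)
    (havoid : ∀ i ≤ k, g i (τ i) ≠ x ∧ g i (τ (i+1)) ≠ x)
    (hnd : ∀ i ≤ k, ∀ s ∈ Icc (τ i) (τ (i+1)), g i s = x → g' i s ≠ 0) :
    (crossSet H x f).Finite ∧
    Tendsto
      (fun δ : ℝ => (1 / (2 * δ)) *
        ∫ s in Icc (0:ℝ) H,
          |f' s| * ({u : ℝ | |f u - x| ≤ δ}.indicator (fun _ => (1:ℝ)) s))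
      (𝓝[>] (0:ℝ))
      (𝓝 (((crossSet H x f).ncard : ℝ))) :=
  kac_counting_formula_piecewise_general H x k τ g g' f f' hτ0 hτH hτmono hderiv hcont hfg hf'
    havoid hnd
end

section
/- Let r : ℝ → ℝ be continuously differentiable and let f : [a,b] → ℝ be differentiable with f'(t) = r(f(t)) for all t ∈ [a,b]. Then f is monotone on [a,b]; in particular, for any x ∈ ℝ with r(x) ≠ 0, there is at most one t ∈ [a,b] with f(t) = x. (Each smooth piece of a piecewise smooth process crosses a given level at most once, so the number of continuous crossings is bounded by the number of jumps plus one.) -/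
/-!
If `r ∘ f` vanishes at some time, `f` passes through an equilibrium of the locally Lipschitz
field `r`, so by uniqueness of solutions it is constant. Otherwise, by Darboux's theorem the
derivative `r ∘ f` has constant sign, and `f` is strictly monotone, hence injective.
-/

open Set

open scoped NNReal

section Autonomous

variable {E : Type*} [NormedAddCommGroup E] [NormedSpace ℝ E] {v : E → E} {f g : ℝ → E}
  {a b t₀ : ℝ}

theorem ODE_solution_unique_of_hasDerivWithinAt_Icc {s : Set E} {K : ℝ≥0}
    (hv : LipschitzOnWith K v s)
    (hf : ∀ t ∈ Icc a b, HasDerivWithinAt f (v (f t)) (Icc a b) t) (hfs : MapsTo f (Icc a b) s)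
    (hg : ∀ t ∈ Icc a b, HasDerivWithinAt g (v (g t)) (Icc a b) t) (hgs : MapsTo g (Icc a b) s)
    (ht₀ : t₀ ∈ Icc a b) (heq : f t₀ = g t₀) :
    EqOn f g (Icc a b) := by
  have hfc : ContinuousOn f (Icc a b) := fun t ht ↦ (hf t ht).continuousWithinAt
  have hgc : ContinuousOn g (Icc a b) := fun t ht ↦ (hg t ht).continuousWithinAt
  rw [← Icc_union_Icc_eq_Icc ht₀.1 ht₀.2]
  refine EqOn.union ?_ ?_
  · have hsub : Ioc a t₀ ⊆ Ioc a b := Ioc_subset_Ioc_right ht₀.2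
    exact ODE_solution_unique_of_mem_Icc_left (v := fun _ ↦ v) (fun _ _ ↦ hv)
      (hfc.mono (Icc_subset_Icc_right ht₀.2))
      (fun t ht ↦ (hf t (Ioc_subset_Icc_self (hsub ht))).mono_of_mem_nhdsWithin
        (Icc_mem_nhdsLE_of_mem (hsub ht)))
      (fun t ht ↦ hfs (Ioc_subset_Icc_self (hsub ht)))
      (hgc.mono (Icc_subset_Icc_right ht₀.2))
      (fun t ht ↦ (hg t (Ioc_subset_Icc_self (hsub ht))).mono_of_mem_nhdsWithin
        (Icc_mem_nhdsLE_of_mem (hsub ht)))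
      (fun t ht ↦ hgs (Ioc_subset_Icc_self (hsub ht))) heq
  · have hsub : Ico t₀ b ⊆ Ico a b := Ico_subset_Ico_left ht₀.1
    exact ODE_solution_unique_of_mem_Icc_right (v := fun _ ↦ v) (fun _ _ ↦ hv)
      (hfc.mono (Icc_subset_Icc_left ht₀.1))
      (fun t ht ↦ (hf t (Ico_subset_Icc_self (hsub ht))).mono_of_mem_nhdsWithin
        (Icc_mem_nhdsGE_of_mem (hsub ht)))
      (fun t ht ↦ hfs (Ico_subset_Icc_self (hsub ht)))
      (hgc.mono (Icc_subset_Icc_left ht₀.1))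
      (fun t ht ↦ (hg t (Ico_subset_Icc_self (hsub ht))).mono_of_mem_nhdsWithin
        (Icc_mem_nhdsGE_of_mem (hsub ht)))
      (fun t ht ↦ hgs (Ico_subset_Icc_self (hsub ht))) heq

theorem ODE_solution_eqOn_const_of_equilibrium (hv : LocallyLipschitz v)
    (hf : ∀ t ∈ Icc a b, HasDerivWithinAt f (v (f t)) (Icc a b) t) (ht₀ : t₀ ∈ Icc a b)
    (h₀ : v (f t₀) = 0) :
    EqOn f (fun _ ↦ f t₀) (Icc a b) := by
  have hfc : ContinuousOn f (Icc a b) := fun t ht ↦ (hf t ht).continuousWithinAt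
  obtain ⟨K, hK⟩ := hv.locallyLipschitzOn.exists_lipschitzOnWith_of_compact
    (isCompact_Icc.image_of_continuousOn hfc)
  refine ODE_solution_unique_of_hasDerivWithinAt_Icc hK hf (mapsTo_image f _)
    (fun t _ ↦ ?_) (fun _ _ ↦ mem_image_of_mem f ht₀) ht₀ rfl
  simpa only [h₀] using hasDerivWithinAt_const t (Icc a b) (f t₀)

end Autonomous

theorem strictMonoOn_or_strictAntiOn_of_hasDerivWithinAt_ne_zero {s : Set ℝ} (hs : Convex ℝ s)
    {f f' : ℝ → ℝ} (hf : ∀ x ∈ s, HasDerivWithinAt f (f' x) s x) (hf' : ∀ x ∈ s, f' x ≠ 0) :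
    StrictMonoOn f s ∨ StrictAntiOn f s := by
  have hfc : ContinuousOn f s := fun x hx ↦ (hf x hx).continuousWithinAt
  have hint : ∀ x ∈ interior s, HasDerivWithinAt f (f' x) (interior s) x := fun x hx ↦
    ((hf x (interior_subset hx)).hasDerivAt (mem_interior_iff_mem_nhds.mp hx)).hasDerivWithinAt
  rcases hasDerivWithinAt_forall_lt_or_forall_gt_of_forall_ne hs hf hf' with hneg | hpos
  · exact .inr (strictAntiOn_of_hasDerivWithinAt_neg hs hfc hint fun x hx ↦
      hneg x (interior_subset hx))
  · exact .inl (strictMonoOn_of_hasDerivWithinAt_pos hs hfc hint fun x hx ↦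
      hpos x (interior_subset hx))

theorem monotone_of_autonomous_ode_general
    (r : ℝ → ℝ) (hr : ContDiff ℝ 1 r)
    (a b : ℝ) (f : ℝ → ℝ)
    (hf : ∀ t ∈ Icc a b, HasDerivWithinAt f (r (f t)) (Icc a b) t) :
    (MonotoneOn f (Icc a b) ∨ AntitoneOn f (Icc a b)) ∧
    (∀ x : ℝ, r x ≠ 0 →
      ∀ t₁ ∈ Icc a b, ∀ t₂ ∈ Icc a b, f t₁ = x → f t₂ = x → t₁ = t₂) := by
  by_cases hrest : ∃ t₀ ∈ Icc a b, r (f t₀) = 0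
  · obtain ⟨t₀, ht₀, h₀⟩ := hrest
    have hconst := ODE_solution_eqOn_const_of_equilibrium hr.locallyLipschitz hf ht₀ h₀
    refine ⟨.inl (monotoneOn_const.congr hconst.symm), fun x hx t₁ ht₁ _ _ h₁ _ ↦ ?_⟩
    exact absurd (by rw [← h₁, hconst ht₁, h₀]) hx
  · push Not at hrest
    rcases strictMonoOn_or_strictAntiOn_of_hasDerivWithinAt_ne_zero (convex_Icc a b) hf hrest
      with hmono | hanti
    · exact ⟨.inl hmono.monotoneOn, fun _ _ t₁ ht₁ t₂ ht₂ h₁ h₂ ↦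
        hmono.injOn ht₁ ht₂ (h₁.trans h₂.symm)⟩
    · exact ⟨.inr hanti.antitoneOn, fun _ _ t₁ ht₁ t₂ ht₂ h₁ h₂ ↦
        hanti.injOn ht₁ ht₂ (h₁.trans h₂.symm)⟩

/-- A solution of the autonomous scalar ODE `f' = r ∘ f` on a closed interval is monotone;
in particular, for any `x` with `r x ≠ 0`, the level `x` is attained at most once. -/
theorem monotone_of_autonomous_ode
    (r : ℝ → ℝ) (hr : ContDiff ℝ 1 r)
    (a b : ℝ) (hab : a ≤ b) (f : ℝ → ℝ)
    (hf : ∀ t ∈ Icc a b, HasDerivWithinAt f (r (f t)) (Icc a b) t) :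
    (MonotoneOn f (Icc a b) ∨ AntitoneOn f (Icc a b)) ∧
    (∀ x : ℝ, r x ≠ 0 →
      ∀ t₁ ∈ Icc a b, ∀ t₂ ∈ Icc a b, f t₁ = x → f t₂ = x → t₁ = t₂) :=
  monotone_of_autonomous_ode_general r hr a b f hf
end

section
/- Let (Ω,𝔉,P) be a probability space, H > 0, x ∈ ℝ, and r : ℝ → ℝ continuously differentiable with r(x) ≠ 0. Let X : Ω × [0,H] → ℝ be jointly measurable such that: (i) for P-almost every ω, the path t ↦ X(ω,t) is a piecewise C¹ path with N(ω) jump times which is a piecewise integral curve of r and avoids the level x at endpoints and jumps; (ii) N is measurable with E[N] < ∞; (iii) for every t ∈ [0,H], the law of X(t) has a density p(t,·) with respect to Lebesgue measure on ℝ, and there is η > 0 such that (t,y) ↦ p(t,y) is continuous on [0,H] × (x−η, x+η). Then the number c_x(H) of continuous crossings of the level x by X on [0,H] and the local time l_x(H) are integrable, and E[c_x(H)] = |r(x)| · E[l_x(H)] = |r(x)| · ∫₀^H p(s,x) ds. (Dalmao–Mordecki formula, Corollary 3.) -/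
/-!
Near the level `x` the field `r` keeps the sign of `r x` and stays within `|r x| / 2` of it. Hence
on each smooth piece the integral curve crosses every level close to `x` in one direction only,
the times it spends within `δ` of `x` form an interval of length at most `4 δ / |r x|`, and this
length is `2 δ / |r x| + o(δ)` when the piece crosses `x` (and `0` for small `δ` otherwise).
Summing over the `N + 1` pieces, the normalised occupation time `(2δ)⁻¹ ∫₀^H 1{|X - x| ≤ δ}`
tends to `c_x(H) / |r x|` and is dominated by `2 (N + 1) / |r x|`. By Fubini its expectation is
`(2δ)⁻¹ ∫₀^H ∫_{x-δ}^{x+δ} p(s, y) dy ds`, which tends to `∫₀^H p(s, x) ds` by continuity of `p`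
near the level, and dominated convergence identifies the two limits.
-/

open MeasureTheory Filter Set Topology

theorem tendsto_inv_of_forall_eventually_mem_Icc {α : Type*} {l : Filter α} {f : α → ℝ} {d : ℝ}
    (hd : 0 < d) (h : ∀ θ ∈ Ioo 0 d, ∀ᶠ a in l, f a ∈ Icc (d + θ)⁻¹ (d - θ)⁻¹) :
    Tendsto f l (𝓝 d⁻¹) := by
  have hcont : ∀ σ : ℝ, Tendsto (fun θ => (d + σ * θ)⁻¹) (𝓝[>] 0) (𝓝 d⁻¹) := fun σ => by
    have : ContinuousAt (fun θ : ℝ => (d + σ * θ)⁻¹) 0 := by fun_prop (disch := simp [hd.ne'])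
    simpa using this.tendsto.mono_left nhdsWithin_le_nhds
  have hsmall : ∀ᶠ θ in 𝓝[>] (0:ℝ), θ ∈ Ioo 0 d := Ioo_mem_nhdsGT hd
  rw [tendsto_order]
  refine ⟨fun c hc => ?_, fun c hc => ?_⟩
  · obtain ⟨θ, hθ, hcθ⟩ := (hsmall.and ((hcont 1).eventually (lt_mem_nhds hc))).exists
    filter_upwards [h θ hθ] with a ha using hcθ.trans_le (by simpa using ha.1)
  · obtain ⟨θ, hθ, hcθ⟩ := (hsmall.and ((hcont (-1)).eventually (gt_mem_nhds hc))).exists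
    filter_upwards [h θ hθ] with a ha using ha.2.trans_lt (by simpa [sub_eq_add_neg] using hcθ)

theorem HasDerivAt.tendsto_measureReal_band_div {g : ℝ → ℝ} {d s κ : ℝ} (hg : HasDerivAt g d s)
    (hd : d ≠ 0) (hκ : 1 ≤ κ * |d|) :
    Tendsto (fun δ => volume.real {t ∈ Metric.closedBall s (κ * δ) | |g t - g s| ≤ δ} / (2 * δ))
      (𝓝[>] 0) (𝓝 |d|⁻¹) := by
  have hd' : 0 < |d| := abs_pos.2 hd
  have hκ0 : 0 < κ := by by_contra! h; nlinarith
  refine tendsto_inv_of_forall_eventually_mem_Icc hd' fun θ hθ => ?_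
  obtain ⟨ρ, hρ, hgρ⟩ :=
    Metric.eventually_nhds_iff_ball.1 ((hasDerivAt_iff_isLittleO.1 hg).def hθ.1)
  filter_upwards [Ioo_mem_nhdsGT (show 0 < ρ / κ by positivity)] with δ hδ
  have hκδ : κ * δ < ρ := (lt_div_iff₀' hκ0).1 hδ.2
  have hlin : ∀ t, |t - s| ≤ κ * δ → |(g t - g s) - d * (t - s)| ≤ θ * |t - s| := fun t ht => by
    simpa [mul_comm] using hgρ t (by rw [Metric.mem_ball, Real.dist_eq]; linarith)
  have hlow : Metric.closedBall s (δ / (|d| + θ)) ⊆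
      {t ∈ Metric.closedBall s (κ * δ) | |g t - g s| ≤ δ} := by
    intro t ht
    rw [Metric.mem_closedBall, Real.dist_eq, le_div_iff₀ (by linarith [hθ.1])] at ht
    have hts : |t - s| ≤ κ * δ := by nlinarith [abs_nonneg (t - s), hδ.1, hθ.1]
    refine ⟨by rwa [Metric.mem_closedBall, Real.dist_eq], ?_⟩
    have := hlin t hts
    have := abs_sub_abs_le_abs_sub (g t - g s) (d * (t - s))
    rw [abs_mul] at *
    nlinarith
  have hup : {t ∈ Metric.closedBall s (κ * δ) | |g t - g s| ≤ δ} ⊆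
      Metric.closedBall s (δ / (|d| - θ)) := by
    rintro t ⟨ht, htδ⟩
    rw [Metric.mem_closedBall, Real.dist_eq] at ht ⊢
    rw [le_div_iff₀ (sub_pos.2 hθ.2)]
    have := hlin t ht
    have := abs_sub_abs_le_abs_sub (d * (t - s)) (g t - g s)
    rw [abs_sub_comm (d * (t - s)), abs_mul] at *
    nlinarith
  have hball : ∀ c > 0, volume.real (Metric.closedBall s (δ / c)) / (2 * δ) = c⁻¹ := fun c hc => by
    rw [Real.volume_real_closedBall (by positivity [hδ.1])]
    field_simp [hδ.1.ne']
  constructor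
  · rw [← hball _ (by linarith [hθ.1])]
    refine div_le_div_of_nonneg_right (measureReal_mono hlow ?_) (by linarith [hδ.1])
    exact ((measure_mono (sep_subset _ _)).trans_lt measure_closedBall_lt_top).ne
  · rw [← hball _ (sub_pos.2 hθ.2)]
    exact div_le_div_of_nonneg_right (measureReal_mono hup measure_closedBall_lt_top.ne)
      (by linarith [hδ.1])

def IsIntegralCurveWithin (r g : ℝ → ℝ) (s : Set ℝ) : Prop :=
  ∀ t ∈ s, HasDerivWithinAt g (r (g t)) s t

namespace IsIntegralCurveWithin

variable {r g : ℝ → ℝ} {a b x y δ ε : ℝ}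

theorem mono {s s' : Set ℝ} (hg : IsIntegralCurveWithin r g s) (hs : s' ⊆ s) :
    IsIntegralCurveWithin r g s' :=
  fun t ht => (hg t (hs ht)).mono hs

theorem continuousOn {s : Set ℝ} (hg : IsIntegralCurveWithin r g s) : ContinuousOn g s :=
  fun t ht => (hg t ht).continuousWithinAt

theorem neg {s : Set ℝ} (hg : IsIntegralCurveWithin r g s) :
    IsIntegralCurveWithin (fun z => -r (-z)) (-g) s := by
  intro t ht
  simpa using (hg t ht).neg

theorem comp_neg (hg : IsIntegralCurveWithin r g (Icc a b)) :
    IsIntegralCurveWithin (fun z => -r z) (fun t => g (-t)) (Icc (-b) (-a)) := by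
  intro t ht
  have hmaps : MapsTo Neg.neg (Icc (-b) (-a)) (Icc a b) := fun u hu =>
    ⟨le_neg.1 hu.2, neg_le.1 hu.1⟩
  have h := (hg (-t) (hmaps ht)).comp t (hasDerivWithinAt_neg t _) hmaps
  rw [mul_neg_one] at h
  exact h

theorem le_of_le_left (hg : IsIntegralCurveWithin r g (Icc a b)) (hy : 0 < r y)
    (ha : y ≤ g a) {t : ℝ} (ht : t ∈ Icc a b) : y ≤ g t :=
  image_le_of_deriv_right_lt_deriv_boundary' continuousOn_const
    (fun _ _ => hasDerivWithinAt_const _ _ _) ha hg.continuousOn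
    (fun s hs => (hg s (Ico_subset_Icc_self hs)).mono_of_mem_nhdsWithin
      (Icc_mem_nhdsGE_of_mem hs))
    (fun _ _ h => h ▸ hy) ht

theorem le_of_le_right (hg : IsIntegralCurveWithin r g (Icc a b)) (hy : 0 < r y)
    (hb : g b ≤ y) {t : ℝ} (ht : t ∈ Icc a b) : g t ≤ y := by
  have := hg.comp_neg.neg.le_of_le_left (y := -y) (by simpa using hy) (by simpa using hb)
    (t := -t) ⟨neg_le_neg ht.2, neg_le_neg ht.1⟩
  simpa using this

theorem ordConnected_band_of_pos (hg : IsIntegralCurveWithin r g (Icc a b))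
    (hr : ∀ z, |z - x| ≤ δ → 0 < r z) : OrdConnected {t ∈ Icc a b | |g t - x| ≤ δ} := by
  refine ⟨fun u hu v hv w hw => ?_⟩
  have hδ : 0 ≤ δ := (abs_nonneg _).trans hu.2
  refine ⟨⟨hu.1.1.trans hw.1, hw.2.trans hv.1.2⟩, abs_le.2 ⟨?_, ?_⟩⟩
  · have := (hg.mono (Icc_subset_Icc hu.1.1 (hw.2.trans hv.1.2))).le_of_le_left
      (hr (x - δ) (by simp [abs_of_nonneg hδ])) (by linarith [(abs_le.1 hu.2).1])
      (right_mem_Icc.2 hw.1)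
    linarith
  · have := (hg.mono (Icc_subset_Icc (hu.1.1.trans hw.1) hv.1.2)).le_of_le_right
      (hr (x + δ) (by simp [abs_of_nonneg hδ])) (by linarith [(abs_le.1 hv.2).2])
      (left_mem_Icc.2 hw.2)
    linarith

theorem ordConnected_band (hg : IsIntegralCurveWithin r g (Icc a b))
    (hband : ∀ z, |z - x| ≤ ε → |r z - r x| ≤ |r x| / 2) (hrx : r x ≠ 0) (hδ : δ ≤ ε) :
    OrdConnected {t ∈ Icc a b | |g t - x| ≤ δ} := by
  rcases hrx.lt_or_gt with hneg | hpos
  · have h := hg.neg.ordConnected_band_of_pos (x := -x) (δ := δ) fun z hz => by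
      have hz' : |-z - x| ≤ ε := by
        rw [show -z - x = -(z - -x) by ring, abs_neg]; exact hz.trans hδ
      have := abs_le.1 (hband (-z) hz')
      rw [abs_of_neg hneg] at this
      linarith
    have hset : ∀ t, |(-g) t - -x| = |g t - x| := fun t => by
      rw [Pi.neg_apply, neg_sub_neg, abs_sub_comm]
    simpa only [hset] using h
  · refine hg.ordConnected_band_of_pos fun z hz => ?_
    have := abs_le.1 (hband z (hz.trans hδ))
    rw [abs_of_pos hpos] at this
    linarith

theorem abs_mul_abs_sub_le_of_mem_band (hg : IsIntegralCurveWithin r g (Icc a b))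
    (hband : ∀ z, |z - x| ≤ ε → |r z - r x| ≤ |r x| / 2) (hrx : r x ≠ 0) (hδ : δ ≤ ε)
    {u v : ℝ} (hu : u ∈ {t ∈ Icc a b | |g t - x| ≤ δ}) (hv : v ∈ {t ∈ Icc a b | |g t - x| ≤ δ}) :
    |r x| * |v - u| ≤ 4 * δ := by
  wlog huv : u ≤ v generalizing u v
  · rw [abs_sub_comm]; exact this hv hu (le_of_not_ge huv)
  have hsub : Icc u v ⊆ {t ∈ Icc a b | |g t - x| ≤ δ} :=
    (hg.ordConnected_band hband hrx hδ).out hu hv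
  -- mean value inequality for `t ↦ g t - r x * t`, whose derivative `r (g t) - r x` is small
  have hmvt := norm_image_sub_le_of_norm_deriv_le_segment' (f := fun t => g t - r x * t)
    (C := |r x| / 2)
    (fun t ht => by
      have h := ((hg.mono (hsub.trans (sep_subset _ _))) t ht).sub
        ((hasDerivWithinAt_id t _).const_mul (r x))
      rw [mul_one] at h
      exact h)
    (fun t ht => hband _ ((hsub (Ico_subset_Icc_self ht)).2.trans hδ)) v (right_mem_Icc.2 huv)
  have hgg : |g v - g u| ≤ 2 * δ := by
    have := abs_sub_le (g v) x (g u)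
    rw [abs_sub_comm x] at this
    linarith [hu.2, hv.2]
  have hlin : |r x * (v - u)| ≤ |g v - g u| + |r x| / 2 * (v - u) :=
    calc |r x * (v - u)| = |(g v - g u) - ((g v - r x * v) - (g u - r x * u))| := by ring_nf
      _ ≤ |g v - g u| + |(g v - r x * v) - (g u - r x * u)| := abs_sub _ _
      _ ≤ _ := add_le_add_right hmvt _
  rw [abs_mul] at hlin
  rw [abs_of_nonneg (sub_nonneg.2 huv)] at hlin ⊢
  linarith

theorem measurableSet_band (hg : IsIntegralCurveWithin r g (Icc a b)) :
    MeasurableSet {t ∈ Icc a b | |g t - x| ≤ δ} :=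
  ((hg.continuousOn.sub continuousOn_const).abs.preimage_isClosed_of_isClosed isClosed_Icc
    isClosed_Iic).measurableSet

theorem measureReal_band_le (hg : IsIntegralCurveWithin r g (Icc a b))
    (hband : ∀ z, |z - x| ≤ ε → |r z - r x| ≤ |r x| / 2) (hrx : r x ≠ 0) (hδ0 : 0 ≤ δ)
    (hδ : δ ≤ ε) : volume.real {t ∈ Icc a b | |g t - x| ≤ δ} ≤ 4 * δ / |r x| := by
  refine ENNReal.toReal_le_of_le_ofReal (by positivity) ((Real.volume_le_diam _).trans
    (Metric.ediam_le fun u hu v hv => ?_))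
  rw [edist_dist, Real.dist_eq]
  refine ENNReal.ofReal_le_ofReal ((le_div_iff₀ (abs_pos.2 hrx)).2 ?_)
  rw [mul_comm]
  exact hg.abs_mul_abs_sub_le_of_mem_band hband hrx hδ hv hu

theorem subsingleton_level (hg : IsIntegralCurveWithin r g (Icc a b))
    (hband : ∀ z, |z - x| ≤ ε → |r z - r x| ≤ |r x| / 2) (hrx : r x ≠ 0) (hε : 0 ≤ ε) :
    {t ∈ Icc a b | g t = x}.Subsingleton := by
  intro u hu v hv
  have h := hg.abs_mul_abs_sub_le_of_mem_band hband hrx hε (δ := 0) ⟨hu.1, by simp [hu.2]⟩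
    ⟨hv.1, by simp [hv.2]⟩
  rw [mul_zero, mul_nonpos_iff_pos_imp_nonpos] at h
  exact (sub_eq_zero.1 (abs_nonpos_iff.1 (h.1 (abs_pos.2 hrx)))).symm

theorem tendsto_measureReal_band_div (hg : IsIntegralCurveWithin r g (Icc a b))
    (hband : ∀ z, |z - x| ≤ ε → |r z - r x| ≤ |r x| / 2) (hrx : r x ≠ 0) (hε : 0 < ε)
    (ha : g a ≠ x) (hb : g b ≠ x) :
    Tendsto (fun δ => volume.real {t ∈ Icc a b | |g t - x| ≤ δ} / (2 * δ)) (𝓝[>] 0)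
      (𝓝 ({t ∈ Icc a b | g t = x}.ncard / |r x|)) := by
  rcases eq_empty_or_nonempty {t ∈ Icc a b | g t = x} with hZ | ⟨s, hs, hgs⟩
  · obtain ⟨m, hm, hmin⟩ := isCompact_Icc.exists_forall_le'
      (hg.continuousOn.sub continuousOn_const).abs (a := 0)
      fun t ht => abs_pos.2 (sub_ne_zero.2 fun h => hZ.subset ⟨ht, h⟩)
    rw [hZ, ncard_empty, Nat.cast_zero, zero_div]
    refine tendsto_const_nhds.congr' ?_
    filter_upwards [Ioo_mem_nhdsGT hm] with δ hδ
    have : {t ∈ Icc a b | |g t - x| ≤ δ} = ∅ :=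
      eq_empty_of_forall_notMem fun t ht => (hδ.2.trans_le (hmin t ht.1)).not_ge ht.2
    rw [this, measureReal_empty, zero_div]
  have hsab : s ∈ Ioo a b := ⟨hs.1.lt_of_ne (by rintro rfl; exact ha hgs),
    hs.2.lt_of_ne (by rintro rfl; exact hb hgs)⟩
  rw [(hg.subsingleton_level hband hrx hε.le).eq_singleton_of_mem ⟨hs, hgs⟩, ncard_singleton,
    Nat.cast_one, one_div]
  have hrx' : 0 < |r x| := abs_pos.2 hrx
  have hder : HasDerivAt g (r x) s := by
    simpa [hgs] using (hg s hs).hasDerivAt (Icc_mem_nhds hsab.1 hsab.2)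
  -- By `abs_mul_abs_sub_le_of_mem_band` the band lies in `closedBall s (4 * δ / |r x|)`,
  -- which is inside `Icc a b` for small `δ`.
  refine (hder.tendsto_measureReal_band_div hrx (κ := 4 / |r x|)
    (by rw [div_mul_cancel₀ _ hrx'.ne']; norm_num)).congr' ?_
  obtain ⟨ρ, hρ, hρab⟩ := Metric.isOpen_iff.1 isOpen_Ioo s hsab
  filter_upwards [Ioo_mem_nhdsGT (lt_min hε (by positivity : 0 < ρ * |r x| / 4))] with δ hδ
  congr 2
  ext t
  rw [hgs]
  refine ⟨fun ⟨ht, htδ⟩ => ⟨Ioo_subset_Icc_self (hρab ?_), htδ⟩, fun ht => ⟨?_, ht.2⟩⟩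
  · refine Metric.closedBall_subset_ball ?_ ht
    rw [div_mul_eq_mul_div, div_lt_iff₀ hrx']
    linarith [hδ.2.trans_le (min_le_right _ _)]
  · rw [Metric.mem_closedBall, Real.dist_eq, div_mul_eq_mul_div, le_div_iff₀ hrx', mul_comm]
    exact hg.abs_mul_abs_sub_le_of_mem_band hband hrx (hδ.2.le.trans (min_le_left _ _))
      ⟨hs, by simp [hgs, hδ.1.le]⟩ ht

end IsIntegralCurveWithin

noncomputable def occupationTime (H x δ : ℝ) (f : ℝ → ℝ) : ℝ :=
  ∫ s in Icc 0 H, {u | |f u - x| ≤ δ}.indicator (fun _ => (1 : ℝ)) s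

def IsPiecewiseIntegralCurveAvoiding (r : ℝ → ℝ) (x H : ℝ) (k : ℕ) (f : ℝ → ℝ) : Prop :=
  ∃ (τ : ℕ → ℝ) (g : ℕ → ℝ → ℝ), τ 0 = 0 ∧ τ (k + 1) = H ∧ (∀ i ≤ k, τ i < τ (i + 1)) ∧
    (∀ i ≤ k, IsIntegralCurveWithin r (g i) (Icc (τ i) (τ (i + 1)))) ∧
    (∀ i ≤ k, EqOn f (g i) (Ico (τ i) (τ (i + 1)))) ∧ f H = g k H ∧
    (∀ i ≤ k, g i (τ i) ≠ x ∧ g i (τ (i + 1)) ≠ x)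

section PiecewiseCurve

variable {r f : ℝ → ℝ} {x H δ ε : ℝ} {k : ℕ} {τ : ℕ → ℝ} {g : ℕ → ℝ → ℝ}

theorem monotoneOn_Iic_of_lt_succ (hτ : ∀ i ≤ k, τ i < τ (i + 1)) :
    MonotoneOn τ (Iic (k + 1)) :=
  (strictMonoOn_Iic_of_lt_succ fun m hm => hτ m (Nat.lt_succ_iff.1 hm)).monotoneOn

theorem crossSet_eq_biUnion (hτ0 : τ 0 = 0) (hτk : τ (k + 1) = H)
    (hτ : ∀ i ≤ k, τ i < τ (i + 1))
    (hg : ∀ i ≤ k, IsIntegralCurveWithin r (g i) (Icc (τ i) (τ (i + 1))))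
    (hfg : ∀ i ≤ k, EqOn f (g i) (Ico (τ i) (τ (i + 1))))
    (hend : ∀ i ≤ k, g i (τ i) ≠ x ∧ g i (τ (i + 1)) ≠ x) :
    crossSet H x f = ⋃ i ∈ Finset.range (k + 1), {t ∈ Icc (τ i) (τ (i + 1)) | g i t = x} := by
  have hmono := monotoneOn_Iic_of_lt_succ hτ
  ext s
  simp only [crossSet, mem_iUnion, Finset.mem_range, Nat.lt_succ_iff, mem_ofPred_eq, exists_prop]
  constructor
  · rintro ⟨hs, -, hfs⟩
    obtain ⟨i, hi, hsi⟩ := mem_iUnion₂.1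
      (Ico_subset_biUnion_Ico (k + 1) τ ⟨hτ0 ▸ hs.1.le, hτk ▸ hs.2⟩)
    have hik : i ≤ k := Nat.lt_succ_iff.1 (Finset.mem_range.1 hi)
    exact ⟨i, hik, Ico_subset_Icc_self hsi, (hfg i hik hsi).symm.trans hfs⟩
  · rintro ⟨i, hik, hs, hgs⟩
    have hsi : s ∈ Ioo (τ i) (τ (i + 1)) := ⟨hs.1.lt_of_ne fun h => (hend i hik).1 (h ▸ hgs),
      hs.2.lt_of_ne' fun h => (hend i hik).2 (h ▸ hgs)⟩
    have h0 : 0 ≤ τ i :=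
      hτ0 ▸ hmono (mem_Iic.2 (Nat.zero_le _)) (mem_Iic.2 (by omega)) (Nat.zero_le i)
    have hH : τ (i + 1) ≤ H := hτk ▸ hmono (mem_Iic.2 (by omega)) (mem_Iic.2 le_rfl) (by omega)
    refine ⟨⟨h0.trans_lt hsi.1, hsi.2.trans_le hH⟩, ?_,
      (hfg i hik (Ioo_subset_Ico_self hsi)).trans hgs⟩
    refine ((hg i hik).continuousOn.continuousAt (Icc_mem_nhds hsi.1 hsi.2)).congr ?_
    filter_upwards [isOpen_Ioo.mem_nhds hsi] with t ht
    exact (hfg i hik (Ioo_subset_Ico_self ht)).symm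

theorem ncard_crossSet (hτ0 : τ 0 = 0) (hτk : τ (k + 1) = H)
    (hτ : ∀ i ≤ k, τ i < τ (i + 1))
    (hg : ∀ i ≤ k, IsIntegralCurveWithin r (g i) (Icc (τ i) (τ (i + 1))))
    (hfg : ∀ i ≤ k, EqOn f (g i) (Ico (τ i) (τ (i + 1))))
    (hend : ∀ i ≤ k, g i (τ i) ≠ x ∧ g i (τ (i + 1)) ≠ x)
    (hband : ∀ z, |z - x| ≤ ε → |r z - r x| ≤ |r x| / 2) (hrx : r x ≠ 0) (hε : 0 ≤ ε) :
    (crossSet H x f).ncard =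
      ∑ i ∈ Finset.range (k + 1), {t ∈ Icc (τ i) (τ (i + 1)) | g i t = x}.ncard := by
  have hmono := monotoneOn_Iic_of_lt_succ hτ
  have hdisj : ∀ i j, i < j → j ≤ k → Disjoint {t ∈ Icc (τ i) (τ (i + 1)) | g i t = x}
      {t ∈ Icc (τ j) (τ (j + 1)) | g j t = x} := fun i j hij hjk =>
    disjoint_left.2 fun t hti htj => (hend j hjk).1 <| by
      rw [← le_antisymm (hti.1.2.trans (hmono (mem_Iic.2 (by omega)) (mem_Iic.2 (by omega)) hij))
        htj.1.1]
      exact htj.2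
  rw [crossSet_eq_biUnion hτ0 hτk hτ hg hfg hend, ← Finset.set_biUnion_coe,
    (Finset.finite_toSet _).ncard_biUnion, finsum_mem_coe_finset]
  · intro i hi
    exact ((hg i (Nat.lt_succ_iff.1 (Finset.mem_range.1 hi))).subsingleton_level hband hrx
      hε).finite
  · intro i hi j hj hij
    simp only [Finset.coe_range, mem_Iio] at hi hj
    rcases hij.lt_or_gt with h | h
    · exact hdisj i j h (by omega)
    · exact (hdisj j i h (by omega)).symm

theorem occupationTime_eq_sum (hf : Measurable f) (hτ0 : τ 0 = 0) (hτk : τ (k + 1) = H)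
    (hτ : ∀ i ≤ k, τ i < τ (i + 1))
    (hg : ∀ i ≤ k, IsIntegralCurveWithin r (g i) (Icc (τ i) (τ (i + 1))))
    (hfg : ∀ i ≤ k, EqOn f (g i) (Ico (τ i) (τ (i + 1)))) :
    occupationTime H x δ f =
      ∑ i ∈ Finset.range (k + 1), volume.real {t ∈ Icc (τ i) (τ (i + 1)) | |g i t - x| ≤ δ} := by
  have hH : 0 ≤ H := hτ0 ▸ hτk ▸ monotoneOn_Iic_of_lt_succ hτ
    (mem_Iic.2 (Nat.zero_le _)) (mem_Iic.2 le_rfl) (Nat.zero_le _)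
  have hmeas : MeasurableSet {u | |f u - x| ≤ δ} :=
    measurableSet_le (hf.sub_const x).abs measurable_const
  rw [occupationTime, integral_Icc_eq_integral_Ioc, ← intervalIntegral.integral_of_le hH, ← hτ0,
    ← hτk, ← intervalIntegral.sum_integral_adjacent_intervals fun i _ =>
      ⟨intervalIntegrable_const.1.indicator hmeas, intervalIntegrable_const.2.indicator hmeas⟩]
  refine Finset.sum_congr rfl fun i hi => ?_
  have hik : i ≤ k := Nat.lt_succ_iff.1 (Finset.mem_range.1 hi)
  rw [intervalIntegral.integral_of_le (hτ i hik).le, integral_Ioc_eq_integral_Ioo,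
    setIntegral_congr_fun measurableSet_Ioo
      (g := {t ∈ Icc (τ i) (τ (i + 1)) | |g i t - x| ≤ δ}.indicator 1) fun t ht => ?_,
    ← integral_Icc_eq_integral_Ioo, integral_indicator_one (hg i hik).measurableSet_band,
    measureReal_restrict_apply (hg i hik).measurableSet_band, inter_eq_left.2 (sep_subset _ _)]
  simp only [indicator, mem_ofPred_eq, hfg i hik (Ioo_subset_Ico_self ht), Ioo_subset_Icc_self ht,
    true_and, Pi.one_apply]

end PiecewiseCurve

namespace IsPiecewiseIntegralCurveAvoiding

variable {r f : ℝ → ℝ} {x H δ ε : ℝ} {k : ℕ}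

theorem norm_occupationTime_div_le (hf : IsPiecewiseIntegralCurveAvoiding r x H k f)
    (hfm : Measurable f) (hband : ∀ z, |z - x| ≤ ε → |r z - r x| ≤ |r x| / 2) (hrx : r x ≠ 0)
    (hδ : δ ∈ Ioc 0 ε) : ‖1 / (2 * δ) * occupationTime H x δ f‖ ≤ 2 * (k + 1) / |r x| := by
  obtain ⟨τ, g, hτ0, hτk, hτ, hg, hfg, -, -⟩ := hf
  have h0 : 0 ≤ occupationTime H x δ f :=
    setIntegral_nonneg measurableSet_Icc fun _ _ => indicator_nonneg (fun _ _ => zero_le_one) _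
  rw [Real.norm_eq_abs, abs_of_nonneg (mul_nonneg (one_div_nonneg.2 (by linarith [hδ.1])) h0),
    occupationTime_eq_sum hfm hτ0 hτk hτ hg hfg]
  calc _ ≤ 1 / (2 * δ) * ∑ _i ∈ Finset.range (k + 1), 4 * δ / |r x| := by
        gcongr with i hi
        · exact one_div_nonneg.2 (by linarith [hδ.1])
        exact (hg i (Nat.lt_succ_iff.1 (Finset.mem_range.1 hi))).measureReal_band_le hband hrx
          hδ.1.le hδ.2
    _ = _ := by
        rw [Finset.sum_const, Finset.card_range, nsmul_eq_mul]
        field_simp [hδ.1.ne']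
        push_cast
        ring

theorem tendsto_occupationTime (hf : IsPiecewiseIntegralCurveAvoiding r x H k f)
    (hfm : Measurable f) (hband : ∀ z, |z - x| ≤ ε → |r z - r x| ≤ |r x| / 2) (hrx : r x ≠ 0)
    (hε : 0 < ε) :
    Tendsto (fun δ => 1 / (2 * δ) * occupationTime H x δ f) (𝓝[>] 0)
      (𝓝 ((crossSet H x f).ncard / |r x|)) := by
  obtain ⟨τ, g, hτ0, hτk, hτ, hg, hfg, -, hend⟩ := hf
  rw [ncard_crossSet hτ0 hτk hτ hg hfg hend hband hrx hε.le, Nat.cast_sum, Finset.sum_div]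
  have hsum : Tendsto (fun δ => ∑ i ∈ Finset.range (k + 1),
      volume.real {t ∈ Icc (τ i) (τ (i + 1)) | |g i t - x| ≤ δ} / (2 * δ)) (𝓝[>] 0) _ :=
    tendsto_finsetSum _ fun i hi => by
      have hik := Nat.lt_succ_iff.1 (Finset.mem_range.1 hi)
      exact (hg i hik).tendsto_measureReal_band_div hband hrx hε (hend i hik).1 (hend i hik).2
  refine hsum.congr fun δ => ?_
  rw [occupationTime_eq_sum hfm hτ0 hτk hτ hg hfg, Finset.mul_sum]
  exact Finset.sum_congr rfl fun _ _ => (one_div_mul_eq_div _ _).symm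

end IsPiecewiseIntegralCurveAvoiding

theorem abs_average_Icc_le {f : ℝ → ℝ} {x δ C : ℝ} (hδ : 0 < δ)
    (hf : ∀ y ∈ Icc (x - δ) (x + δ), |f y| ≤ C) :
    |1 / (2 * δ) * ∫ y in Icc (x - δ) (x + δ), f y| ≤ C := by
  have h := norm_setIntegral_le_of_norm_le_const (f := f) (μ := volume) measure_Icc_lt_top hf
  rw [Real.volume_real_Icc_of_le (by linarith), Real.norm_eq_abs] at h
  rw [abs_mul, abs_of_pos (by positivity), one_div_mul_eq_div, div_le_iff₀ (by positivity)]
  linarith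

theorem tendsto_average_Icc {f : ℝ → ℝ} {x η : ℝ} (hη : 0 < η)
    (hf : ContinuousOn f (Icc (x - η) (x + η))) :
    Tendsto (fun δ => 1 / (2 * δ) * ∫ y in Icc (x - δ) (x + δ), f y) (𝓝[>] 0) (𝓝 (f x)) := by
  rw [Metric.tendsto_nhds]
  intro θ hθ
  obtain ⟨ρ, hρ, hfρ⟩ := Metric.continuousAt_iff.1
    (hf.continuousAt (Icc_mem_nhds (show x - η < x by linarith) (show x < x + η by linarith)))
    (θ / 2) (by positivity)
  filter_upwards [Ioo_mem_nhdsGT (lt_min hρ hη)] with δ hδ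
  obtain ⟨hδ0, hδρ, hδη⟩ : 0 < δ ∧ δ < ρ ∧ δ < η := ⟨hδ.1, lt_min_iff.1 hδ.2⟩
  have hint : IntegrableOn f (Icc (x - δ) (x + δ)) :=
    (hf.mono (Icc_subset_Icc (by linarith) (by linarith))).integrableOn_Icc
  have hsub : (1 / (2 * δ) * ∫ y in Icc (x - δ) (x + δ), f y) - f x =
      1 / (2 * δ) * ∫ y in Icc (x - δ) (x + δ), (f y - f x) := by
    rw [integral_sub hint (integrableOn_const measure_Icc_lt_top.ne), setIntegral_const,
      Real.volume_real_Icc_of_le (by linarith), smul_eq_mul]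
    field_simp
    ring
  rw [Real.dist_eq, hsub]
  refine (abs_average_Icc_le hδ0 fun y hy => ?_).trans_lt (half_lt_self hθ)
  rw [← Real.dist_eq]
  exact (hfρ (by rw [Real.dist_eq, abs_lt]; constructor <;> linarith [hy.1, hy.2])).le

theorem setIntegral_density_nonneg {Ω α : Type*} [MeasurableSpace Ω] [MeasurableSpace α]
    {P : Measure Ω} [IsProbabilityMeasure P] {m : Measure α} {Y : Ω → α} {f : α → ℝ}
    (h : ∀ A, MeasurableSet A → P {ω | Y ω ∈ A} = ENNReal.ofReal (∫ y in A, f y ∂m))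
    {A : Set α} (hA : MeasurableSet A) : 0 ≤ ∫ y in A, f y ∂m := by
  have huniv := h univ MeasurableSet.univ
  simp only [mem_univ, ofPred_true, measure_univ, Measure.restrict_univ] at huniv
  have hint : Integrable f m := by
    by_contra hf
    rw [integral_undef hf, ENNReal.ofReal_zero] at huniv
    exact one_ne_zero huniv
  have hcompl : ∫ y in Aᶜ, f y ∂m ≤ 1 :=
    ENNReal.ofReal_le_one.1 (h Aᶜ hA.compl ▸ prob_le_one)
  linarith [integral_add_compl hA hint, ENNReal.ofReal_eq_one.1 huniv.symm]

theorem integral_measureReal_slice {Ω T E : Type*} [MeasurableSpace Ω] [MeasurableSpace T]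
    [MeasurableSpace E] {P : Measure Ω} {ν : Measure T} [IsFiniteMeasure P] [IsFiniteMeasure ν]
    {X : Ω → T → E} (hX : Measurable (Function.uncurry X)) {B : Set E} (hB : MeasurableSet B) :
    ∫ ω, ν.real {u | X ω u ∈ B} ∂P = ∫ u, P.real {ω | X ω u ∈ B} ∂ν := by
  have hA : MeasurableSet (Function.uncurry X ⁻¹' B) := hX hB
  simp only [measureReal_def]
  calc ∫ ω, (ν (Prod.mk ω ⁻¹' (Function.uncurry X ⁻¹' B))).toReal ∂P
      = ((P.prod ν) (Function.uncurry X ⁻¹' B)).toReal := by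
        rw [integral_toReal (measurable_measure_prodMk_left hA).aemeasurable
          (ae_of_all _ fun _ => measure_lt_top _ _), Measure.prod_apply hA]
    _ = ∫ u, (P ((fun ω => (ω, u)) ⁻¹' (Function.uncurry X ⁻¹' B))).toReal ∂ν := by
        rw [integral_toReal (measurable_measure_prodMk_right hA).aemeasurable
          (ae_of_all _ fun _ => measure_lt_top _ _), Measure.prod_apply_symm hA]

theorem occupationTime_eq_measureReal {f : ℝ → ℝ} (hf : Measurable f) (H x δ : ℝ) :
    occupationTime H x δ f = (volume.restrict (Icc 0 H)).real (f ⁻¹' Metric.closedBall x δ) := by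
  rw [← integral_indicator_one (hf Metric.isClosed_closedBall.measurableSet)]
  rfl

theorem measurable_occupationTime {Ω : Type*} [MeasurableSpace Ω] {X : Ω → ℝ → ℝ}
    (hX : Measurable (Function.uncurry X)) (H x δ : ℝ) :
    Measurable fun ω => occupationTime H x δ (X ω) := by
  simp_rw [fun ω => occupationTime_eq_measureReal (hX.of_uncurry_left (x := ω)) H x δ]
  exact (measurable_measure_prodMk_left
    (hX Metric.isClosed_closedBall.measurableSet)).ennreal_toReal

theorem integral_occupationTime {Ω : Type*} [MeasurableSpace Ω] {P : Measure Ω}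
    [IsFiniteMeasure P] {X : Ω → ℝ → ℝ} (hX : Measurable (Function.uncurry X)) (H x δ : ℝ) :
    ∫ ω, occupationTime H x δ (X ω) ∂P =
      ∫ s in Icc 0 H, P.real {ω | X ω s ∈ Metric.closedBall x δ} := by
  simp_rw [fun ω => occupationTime_eq_measureReal (hX.of_uncurry_left (x := ω)) H x δ]
  exact integral_measureReal_slice hX Metric.isClosed_closedBall.measurableSet

theorem tendsto_integral_occupationTime_div {Ω : Type*} [MeasurableSpace Ω] {P : Measure Ω}
    [IsProbabilityMeasure P] {X : Ω → ℝ → ℝ} (hX : Measurable (Function.uncurry X))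
    {p : ℝ → ℝ → ℝ} {H x η : ℝ}
    (hlaw : ∀ t ∈ Icc (0:ℝ) H, ∀ A : Set ℝ, MeasurableSet A →
      P {ω | X ω t ∈ A} = ENNReal.ofReal (∫ y in A, p t y))
    (hη : 0 < η) (hp : ContinuousOn (Function.uncurry p) (Icc 0 H ×ˢ Ioo (x - η) (x + η))) :
    Tendsto (fun δ => ∫ ω, 1 / (2 * δ) * occupationTime H x δ (X ω) ∂P) (𝓝[>] 0)
      (𝓝 (∫ s in Icc 0 H, p s x)) := by
  have hpK : ContinuousOn (Function.uncurry p) (Icc 0 H ×ˢ Icc (x - η / 2) (x + η / 2)) :=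
    hp.mono (prod_mono subset_rfl (Icc_subset_Ioo (by linarith) (by linarith)))
  obtain ⟨M, hM⟩ := (isCompact_Icc.prod isCompact_Icc).exists_bound_of_continuousOn hpK
  have hprob : ∀ s ∈ Icc 0 H, ∀ δ,
      P.real {ω | X ω s ∈ Metric.closedBall x δ} = ∫ y in Icc (x - δ) (x + δ), p s y :=
    fun s hs δ => by
      rw [Real.closedBall_eq_Icc, measureReal_def, hlaw s hs _ measurableSet_Icc,
        ENNReal.toReal_ofReal (setIntegral_density_nonneg (hlaw s hs) measurableSet_Icc)]
  have hlim := tendsto_integral_filter_of_dominated_convergence (μ := volume.restrict (Icc 0 H))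
    (F := fun δ s => 1 / (2 * δ) * P.real {ω | X ω s ∈ Metric.closedBall x δ}) (fun _ => M)
    (Eventually.of_forall fun δ => (((measurable_measure_prodMk_right
      (hX Metric.isClosed_closedBall.measurableSet)).ennreal_toReal).const_mul
        _).aestronglyMeasurable)
    (by
      filter_upwards [Ioc_mem_nhdsGT (half_pos hη)] with δ hδ
      filter_upwards [ae_restrict_mem measurableSet_Icc] with s hs
      rw [hprob s hs, Real.norm_eq_abs]
      exact abs_average_Icc_le hδ.1 fun y hy => hM (s, y)
        ⟨hs, Icc_subset_Icc (by linarith [hδ.2]) (by linarith [hδ.2]) hy⟩)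
    (integrable_const M)
    (by
      filter_upwards [ae_restrict_mem measurableSet_Icc] with s hs
      simp_rw [hprob s hs]
      have hps : ContinuousOn (fun y => Function.uncurry p (s, y)) (Icc (x - η / 2) (x + η / 2)) :=
        hpK.comp (continuous_const.prodMk continuous_id).continuousOn fun y hy => ⟨hs, hy⟩
      exact tendsto_average_Icc (half_pos hη) hps)
  refine hlim.congr fun δ => ?_
  rw [integral_const_mul, integral_const_mul, integral_occupationTime hX]

theorem integrable_and_tendsto_integral_of_dominated {ι Ω : Type*} [MeasurableSpace Ω]
    {P : Measure Ω} {l : Filter ι} [l.NeBot] [l.IsCountablyGenerated] {F : ι → Ω → ℝ}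
    {f bound : Ω → ℝ} {s : Set ι} (hs : s ∈ l) (hF : ∀ i, AEStronglyMeasurable (F i) P)
    (hb : ∀ᵐ ω ∂P, ∀ i ∈ s, ‖F i ω‖ ≤ bound ω) (hbi : Integrable bound P)
    (hlim : ∀ᵐ ω ∂P, Tendsto (fun i => F i ω) l (𝓝 (f ω))) :
    Integrable f P ∧ Tendsto (fun i => ∫ ω, F i ω ∂P) l (𝓝 (∫ ω, f ω ∂P)) := by
  refine ⟨hbi.mono' (aemeasurable_of_tendsto_metrizable_ae l (fun i => (hF i).aemeasurable)
    hlim).aestronglyMeasurable ?_,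
    tendsto_integral_filter_of_dominated_convergence bound (Eventually.of_forall hF) ?_ hbi hlim⟩
  · filter_upwards [hb, hlim] with ω hbω hω using
      le_of_tendsto hω.norm (eventually_of_mem hs hbω)
  · filter_upwards [hs] with i hi
    filter_upwards [hb] with ω hω using hω i hi

theorem dalmao_mordecki_formula_general
    {Ω : Type*} [MeasurableSpace Ω] (P : Measure Ω) [IsProbabilityMeasure P]
    (H x : ℝ) (hH : 0 < H)
    (r : ℝ → ℝ) (hr : ContDiff ℝ 1 r) (hrx : r x ≠ 0)
    (X : Ω → ℝ → ℝ) (hX : Measurable (Function.uncurry X))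
    (N : Ω → ℕ) (hNint : Integrable (fun ω => (N ω : ℝ)) P)
    (hpath : ∀ᵐ ω ∂P, ∃ (τ : ℕ → ℝ) (g : ℕ → ℝ → ℝ),
      τ 0 = 0 ∧ τ (N ω + 1) = H ∧ (∀ i ≤ N ω, τ i < τ (i+1)) ∧
      (∀ i ≤ N ω, ∀ s ∈ Icc (τ i) (τ (i+1)),
        HasDerivWithinAt (g i) (r (g i s)) (Icc (τ i) (τ (i+1))) s) ∧
      (∀ i ≤ N ω, ∀ s ∈ Ico (τ i) (τ (i+1)), X ω s = g i s) ∧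
      X ω H = g (N ω) H ∧
      (∀ i ≤ N ω, g i (τ i) ≠ x ∧ g i (τ (i+1)) ≠ x))
    (p : ℝ → ℝ → ℝ)
    (hlaw : ∀ t ∈ Icc (0:ℝ) H, ∀ A : Set ℝ, MeasurableSet A →
      P {ω | X ω t ∈ A} = ENNReal.ofReal (∫ y in A, p t y))
    (hpcont : ∃ η > (0:ℝ),
      ContinuousOn (Function.uncurry p) (Icc (0:ℝ) H ×ˢ Ioo (x - η) (x + η))) :
    ∃ l : Ω → ℝ,
      (∀ᵐ ω ∂P,
        Tendsto
          (fun δ : ℝ => (1 / (2 * δ)) *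
            ∫ s in Icc (0:ℝ) H, ({u : ℝ | |X ω u - x| ≤ δ}.indicator (fun _ => (1:ℝ)) s))
          (𝓝[>] (0:ℝ)) (𝓝 (l ω))) ∧
      Integrable (fun ω => ((crossSet H x (X ω)).ncard : ℝ)) P ∧
      Integrable l P ∧
      (∫ ω, ((crossSet H x (X ω)).ncard : ℝ) ∂P) = |r x| * (∫ ω, l ω ∂P) ∧
      (∫ ω, l ω ∂P) = ∫ s in (0:ℝ)..H, p s x := by
  obtain ⟨η, hη, hpc⟩ := hpcont
  obtain ⟨ρ, hρ, hrρ⟩ :=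
    Metric.continuousAt_iff.1 hr.continuous.continuousAt (|r x| / 2) (by positivity)
  have hband : ∀ z, |z - x| ≤ ρ / 2 → |r z - r x| ≤ |r x| / 2 := fun z hz => by
    simpa [Real.dist_eq] using (hrρ (by rw [Real.dist_eq]; linarith)).le
  set l := fun ω => ((crossSet H x (X ω)).ncard : ℝ) / |r x|
  have hconv : ∀ᵐ ω ∂P, Tendsto (fun δ => 1 / (2 * δ) * occupationTime H x δ (X ω)) (𝓝[>] 0)
      (𝓝 (l ω)) := by
    filter_upwards [hpath] with ω hω using
      IsPiecewiseIntegralCurveAvoiding.tendsto_occupationTime hω hX.of_uncurry_left hband hrx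
        (half_pos hρ)
  obtain ⟨hl, hlim⟩ := integrable_and_tendsto_integral_of_dominated (Ioc_mem_nhdsGT (half_pos hρ))
    (fun δ => ((measurable_occupationTime hX H x δ).const_mul _).aestronglyMeasurable)
    (by
      filter_upwards [hpath] with ω hω δ hδ using
        IsPiecewiseIntegralCurveAvoiding.norm_occupationTime_div_le hω hX.of_uncurry_left hband
          hrx hδ)
    (((hNint.add (integrable_const 1)).const_mul 2).div_const |r x|) hconv
  have hcl : (fun ω => ((crossSet H x (X ω)).ncard : ℝ)) = fun ω => |r x| * l ω :=
    funext fun ω => (mul_div_cancel₀ _ (abs_ne_zero.2 hrx)).symm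
  refine ⟨l, hconv, hcl ▸ hl.const_mul _, hl, by rw [hcl, integral_const_mul], ?_⟩
  rw [tendsto_nhds_unique hlim (tendsto_integral_occupationTime_div hX hlaw hη hpc),
    intervalIntegral.integral_of_le hH.le, integral_Icc_eq_integral_Ioc]

/-- **Dalmao–Mordecki formula (Corollary 3).** Under integrability of the number of jumps
and continuity of the densities near the level `x`, the number of continuous crossings
`c_x(H)` and the local time `l_x(H)` are integrable and
`E[c_x(H)] = |r(x)| E[l_x(H)] = |r(x)| ∫₀^H p(s,x) ds`. -/
theorem dalmao_mordecki_formula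
    {Ω : Type*} [MeasurableSpace Ω] (P : Measure Ω) [IsProbabilityMeasure P]
    (H x : ℝ) (hH : 0 < H)
    (r : ℝ → ℝ) (hr : ContDiff ℝ 1 r) (hrx : r x ≠ 0)
    (X : Ω → ℝ → ℝ) (hX : Measurable (Function.uncurry X))
    (N : Ω → ℕ) (hN : Measurable N) (hNint : Integrable (fun ω => (N ω : ℝ)) P)
    (hpath : ∀ᵐ ω ∂P, ∃ (τ : ℕ → ℝ) (g : ℕ → ℝ → ℝ),
      τ 0 = 0 ∧ τ (N ω + 1) = H ∧ (∀ i ≤ N ω, τ i < τ (i+1)) ∧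
      (∀ i ≤ N ω, ∀ s ∈ Icc (τ i) (τ (i+1)),
        HasDerivWithinAt (g i) (r (g i s)) (Icc (τ i) (τ (i+1))) s) ∧
      (∀ i ≤ N ω, ∀ s ∈ Ico (τ i) (τ (i+1)), X ω s = g i s) ∧
      X ω H = g (N ω) H ∧
      (∀ i ≤ N ω, g i (τ i) ≠ x ∧ g i (τ (i+1)) ≠ x))
    (p : ℝ → ℝ → ℝ)
    (hlaw : ∀ t ∈ Icc (0:ℝ) H, ∀ A : Set ℝ, MeasurableSet A →
      P {ω | X ω t ∈ A} = ENNReal.ofReal (∫ y in A, p t y))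
    (hpcont : ∃ η > (0:ℝ),
      ContinuousOn (Function.uncurry p) (Icc (0:ℝ) H ×ˢ Ioo (x - η) (x + η))) :
    ∃ l : Ω → ℝ,
      (∀ᵐ ω ∂P,
        Tendsto
          (fun δ : ℝ => (1 / (2 * δ)) *
            ∫ s in Icc (0:ℝ) H, ({u : ℝ | |X ω u - x| ≤ δ}.indicator (fun _ => (1:ℝ)) s))
          (𝓝[>] (0:ℝ)) (𝓝 (l ω))) ∧
      Integrable (fun ω => ((crossSet H x (X ω)).ncard : ℝ)) P ∧
      Integrable l P ∧
      (∫ ω, ((crossSet H x (X ω)).ncard : ℝ) ∂P) = |r x| * (∫ ω, l ω ∂P) ∧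
      (∫ ω, l ω ∂P) = ∫ s in (0:ℝ)..H, p s x :=
  dalmao_mordecki_formula_general P H x hH r hr hrx X hX N hNint hpath p hlaw hpcont
end
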